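/- arXiv:2010.01415 — 3 statements merged into one kernel-verified Lean document; each statement's English description precedes it below -/
import Mathlib

section
/- In the TRIX grid process with i.i.d. fair coin-flip wire delays, the skew between horizontal neighbors s(H) = d(1,H) − d(0,H) is a symmetric random variable: s(H) and −s(H) have the same distribution; in particular E[s(H)] = 0. -/
/-- Median (second smallest) of three integers. -/
def med3 (a b c : ℤ) : ℤ := max (min a b) (min (max a b) c)

/-- TRIX pulse times: `trixD w y x` is the time `d(x,y)` at which node `(x,y)` pulses,
given wire delays `w x y c` on the wire from `(x+c,y)` to `(x,y+1)`. -/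
def trixD (w : ℤ → ℕ → ℤ → ℤ) : ℕ → ℤ → ℤ
  | 0, _ => 0
  | y + 1, x =>
      med3 (trixD w y (x - 1) + w x y (-1)) (trixD w y x + w x y 0)
        (trixD w y (x + 1) + w x y 1)

/-!
Flipping every delay `w ↦ 1 - w` turns `d(x,y)` into `y - d(x,y)`, since the median commutes
with the reflection `t ↦ k - t`; hence it negates the skew. For independent fair coins the flip
preserves the joint law of all delays (both laws are the infinite product of uniform measures on
`Bool`), so the skew and its negative are equal in law, and a symmetric integer variable has
mean zero.
-/

open MeasureTheory ProbabilityTheory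

lemma med3_sub_sub_sub_left (k a b c : ℤ) : med3 (k - a) (k - b) (k - c) = k - med3 a b c := by
  simp only [med3]; omega

lemma trixD_one_sub (w : ℤ → ℕ → ℤ → ℤ) (y : ℕ) (x : ℤ) :
    trixD (fun x y c => 1 - w x y c) y x = y - trixD w y x := by
  induction y generalizing x with
  | zero => simp [trixD]
  | succ y ih =>
    have shift (a b : ℤ) : (y - a) + (1 - b) = ((y + 1 : ℕ) : ℤ) - (a + b) := by push_cast; ring
    simp only [trixD, ih, shift, med3_sub_sub_sub_left]

def trixSkew (w : ℤ → ℕ → ℤ → ℤ) (H : ℕ) : ℤ := trixD w H 1 - trixD w H 0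

lemma trixSkew_one_sub (w : ℤ → ℕ → ℤ → ℤ) (H : ℕ) :
    trixSkew (fun x y c => 1 - w x y c) H = -trixSkew w H := by
  simp only [trixSkew, trixD_one_sub]; ring

def coinDelays (b : ℤ × ℕ × ℤ → Bool) (x : ℤ) (y : ℕ) (c : ℤ) : ℤ :=
  if b (x, y, c) then 1 else 0

lemma coinDelays_not (b : ℤ × ℕ × ℤ → Bool) :
    coinDelays (fun p => !b p) = fun x y c => 1 - coinDelays b x y c := by
  funext x y c; cases h : b (x, y, c) <;> simp [coinDelays, h]

lemma measurable_trixD_coinDelays (y : ℕ) (x : ℤ) :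
    Measurable fun b : ℤ × ℕ × ℤ → Bool => trixD (coinDelays b) y x := by
  induction y generalizing x with
  | zero => exact measurable_const
  | succ y ih =>
    have hdelay (p : ℤ × ℕ × ℤ) :
        Measurable fun b : ℤ × ℕ × ℤ → Bool => coinDelays b p.1 p.2.1 p.2.2 :=
      (measurable_of_countable fun v : Bool => if v then (1 : ℤ) else 0).comp
        (measurable_pi_apply p)
    have hargs := ((ih (x - 1)).add (hdelay (x, y, -1))).prodMk
      (((ih x).add (hdelay (x, y, 0))).prodMk ((ih (x + 1)).add (hdelay (x, y, 1))))
    exact (measurable_of_countable fun t : ℤ × ℤ × ℤ => med3 t.1 t.2.1 t.2.2).comp hargs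

lemma uniformOfFintype_bool_map_not :
    (PMF.uniformOfFintype Bool).toMeasure.map not = (PMF.uniformOfFintype Bool).toMeasure := by
  refine Measure.ext_of_singleton fun b => ?_
  rw [Measure.map_apply (measurable_of_countable _) (measurableSet_singleton b)]
  cases b <;> simp

section FairCoins

variable {ι Ω : Type*} [MeasurableSpace Ω] {μ : Measure Ω} {X : ι → Ω → Bool}

lemma map_fun_eq_infinitePi_uniform (hmeas : ∀ i, Measurable (X i)) (hindep : iIndepFun X μ)
    (hdist : ∀ i, μ.map (X i) = (PMF.uniformOfFintype Bool).toMeasure) :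
    μ.map (fun ω i => X i ω) =
      Measure.infinitePi fun _ => (PMF.uniformOfFintype Bool).toMeasure := by
  simp only [hindep.map_fun_eq_infinitePi_map hmeas, hdist]

lemma map_fun_not_eq_map_fun (hmeas : ∀ i, Measurable (X i)) (hindep : iIndepFun X μ)
    (hdist : ∀ i, μ.map (X i) = (PMF.uniformOfFintype Bool).toMeasure) :
    μ.map (fun ω i => !X i ω) = μ.map (fun ω i => X i ω) := by
  have hnot : Measurable not := measurable_of_countable _
  rw [map_fun_eq_infinitePi_uniform hmeas hindep hdist]
  refine map_fun_eq_infinitePi_uniform (X := fun i => not ∘ X i) (fun i => hnot.comp (hmeas i))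
    (hindep.comp (fun _ => not) fun _ => hnot) fun i => ?_
  rw [← Measure.map_map hnot (hmeas i), hdist, uniformOfFintype_bool_map_not]

end FairCoins

lemma integral_eq_zero_of_map_eq_map_neg {Ω : Type*} [MeasurableSpace Ω] {μ : Measure Ω}
    {s : Ω → ℤ} (hs : Measurable s) (hsym : μ.map s = μ.map (fun ω => -s ω)) :
    ∫ ω, (s ω : ℝ) ∂μ = 0 := by
  have hcast : Measurable fun z : ℤ => (z : ℝ) := measurable_of_countable _
  have hodd : ∫ ω, (s ω : ℝ) ∂μ = -∫ ω, (s ω : ℝ) ∂μ :=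
    calc ∫ ω, (s ω : ℝ) ∂μ = ∫ z, (z : ℝ) ∂(μ.map s) :=
          (integral_map hs.aemeasurable hcast.aestronglyMeasurable).symm
      _ = ∫ z, (z : ℝ) ∂(μ.map fun ω => -s ω) := by rw [hsym]
      _ = ∫ ω, ((-s ω : ℤ) : ℝ) ∂μ := integral_map hs.neg.aemeasurable hcast.aestronglyMeasurable
      _ = -∫ ω, (s ω : ℝ) ∂μ := by simp only [Int.cast_neg, integral_neg]
  linarith

theorem trixD_skew_symmetric_general {Ω : Type*} [MeasurableSpace Ω] (μ : Measure Ω)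
    (wb : ℤ × ℕ × ℤ → Ω → Bool)
    (hmeas : ∀ p, Measurable (wb p))
    (hindep : iIndepFun wb μ)
    (hdist : ∀ p, μ.map (wb p) = (PMF.uniformOfFintype Bool).toMeasure)
    (H : ℕ) :
    μ.map (fun ω =>
        trixD (fun x y c => if wb (x, y, c) ω then 1 else 0) H 1 -
          trixD (fun x y c => if wb (x, y, c) ω then 1 else 0) H 0) =
      μ.map (fun ω =>
        -(trixD (fun x y c => if wb (x, y, c) ω then 1 else 0) H 1 -
            trixD (fun x y c => if wb (x, y, c) ω then 1 else 0) H 0)) ∧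
    ∫ ω, ((trixD (fun x y c => if wb (x, y, c) ω then 1 else 0) H 1 -
          trixD (fun x y c => if wb (x, y, c) ω then 1 else 0) H 0 : ℤ) : ℝ) ∂μ = 0 := by
  set F : (ℤ × ℕ × ℤ → Bool) → ℤ := fun b => trixSkew (coinDelays b) H
  have hF : Measurable F :=
    (measurable_trixD_coinDelays H 1).sub (measurable_trixD_coinDelays H 0)
  have hT : Measurable fun ω p => wb p ω := measurable_pi_lambda _ hmeas
  have hT' : Measurable fun ω p => !wb p ω :=
    measurable_pi_lambda _ fun p => (measurable_of_countable not).comp (hmeas p)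
  have hsym : μ.map (fun ω => F fun p => wb p ω) = μ.map (fun ω => -F fun p => wb p ω) := by
    have hneg (ω : Ω) : -F (fun p => wb p ω) = F fun p => !wb p ω := by
      simp only [F, coinDelays_not, trixSkew_one_sub]
    calc μ.map (fun ω => F fun p => wb p ω) = (μ.map fun ω p => wb p ω).map F :=
          (Measure.map_map hF hT).symm
      _ = (μ.map fun ω p => !wb p ω).map F := by rw [map_fun_not_eq_map_fun hmeas hindep hdist]
      _ = μ.map (fun ω => -F fun p => wb p ω) := by
          rw [Measure.map_map hF hT']; simp only [hneg]; rfl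
  exact ⟨hsym, integral_eq_zero_of_map_eq_map_neg (hF.comp hT) hsym⟩

/-- With i.i.d. fair coin-flip wire delays, the skew s(H) = d(1,H) − d(0,H) between
horizontal neighbors is a symmetric random variable; in particular E[s(H)] = 0. -/
theorem trixD_skew_symmetric {Ω : Type*} [MeasurableSpace Ω] (μ : Measure Ω)
    [IsProbabilityMeasure μ] (wb : ℤ × ℕ × ℤ → Ω → Bool)
    (hmeas : ∀ p, Measurable (wb p))
    (hindep : iIndepFun wb μ)
    (hdist : ∀ p, μ.map (wb p) = (PMF.uniformOfFintype Bool).toMeasure)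
    (H : ℕ) :
    μ.map (fun ω =>
        trixD (fun x y c => if wb (x, y, c) ω then 1 else 0) H 1 -
          trixD (fun x y c => if wb (x, y, c) ω then 1 else 0) H 0) =
      μ.map (fun ω =>
        -(trixD (fun x y c => if wb (x, y, c) ω then 1 else 0) H 1 -
            trixD (fun x y c => if wb (x, y, c) ω then 1 else 0) H 0)) ∧
    ∫ ω, ((trixD (fun x y c => if wb (x, y, c) ω then 1 else 0) H 1 -
          trixD (fun x y c => if wb (x, y, c) ω then 1 else 0) H 0 : ℤ) : ℝ) ∂μ = 0 :=
  trixD_skew_symmetric_general μ wb hmeas hindep hdist H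
end

section
/- There exists a deterministic assignment of wire delays in {0,1} for the TRIX grid such that the skew between horizontal neighbors at layer H equals H, i.e., d(1,H) − d(0,H) = H. Concretely, assigning delay 1 to every wire leading into a node with positive x-coordinate and delay 0 to every wire leading into a node with non-positive x-coordinate yields d(x,y) = y for x ≥ 1 and d(x,y) = 0 for x ≤ 0. -/
/-- The delay assignment giving delay 1 to every wire leading into a node with
positive x-coordinate and delay 0 otherwise. -/
def worstW : ℤ → ℕ → ℤ → ℤ := fun x _ _ => if 0 < x then 1 else 0

lemma trixD_worst (y : ℕ) (x : ℤ) :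
    trixD worstW y x = if 0 < x then (y : ℤ) else 0 := by
  induction y generalizing x with
  | zero => simp [trixD]
  | succ y ih =>
    have hy : (0:ℤ) ≤ y := Int.natCast_nonneg y
    simp only [trixD, worstW, med3, ih]
    push_cast
    split_ifs <;> omega

/-- Under `worstW`, nodes with positive x pulse at time y, nodes with non-positive x
at time 0; in particular the skew between horizontal neighbors at layer H is H. -/
theorem trixD_worst_case :
    (∀ (y : ℕ) (x : ℤ), 0 < x → trixD worstW y x = (y : ℤ)) ∧
    (∀ (y : ℕ) (x : ℤ), x ≤ 0 → trixD worstW y x = 0) ∧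
    (∀ H : ℕ, trixD worstW H 1 - trixD worstW H 0 = (H : ℤ)) := by
  refine ⟨fun y x hx => by simp [trixD_worst, hx],
    fun y x hx => by simp [trixD_worst, not_lt.mpr hx],
    fun H => by simp [trixD_worst]⟩
end

section
/- The TRIX grid process is mirror symmetric: if delay assignment s' reflects s about column x₀ (w(x,y,c)[s'] = w(2x₀−x,y,−c)[s]), then d(x,y)[s'] = d(2x₀−x,y)[s]. Consequently, with i.i.d. uniform delays, the skew s(H) = d(x+1,H) − d(x,H) has the same distribution as d(x,H) − d(x+1,H), i.e., s(H) is symmetric about 0. -/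
open MeasureTheory ProbabilityTheory

lemma med3_comm (a b c : ℤ) : med3 a b c = med3 c b a := by
  unfold med3; rcases le_total a b with h|h <;> rcases le_total b c with h'|h' <;>
    rcases le_total a c with h''|h'' <;> omega

lemma trixD_reflect (w : ℤ → ℕ → ℤ → ℤ) (k : ℤ) :
    ∀ (y : ℕ) (x : ℤ), trixD (fun a y c => w (k - a) y (-c)) y x = trixD w y (k - x) := by
  intro y
  induction y with
  | zero => intro x; rfl
  | succ y ih =>
    intro x
    show med3 _ _ _ = _
    rw [ih, ih, ih]
    have h1 : k - (x - 1) = k - x + 1 := by ring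
    have h2 : k - (x + 1) = k - x - 1 := by ring
    rw [h1, h2]
    rw [med3_comm]
    rfl

lemma trixD_congr (w w' : ℤ → ℕ → ℤ → ℤ) :
    ∀ (y : ℕ) (x : ℤ),
      (∀ a (z : ℕ) (c : ℤ), z < y → (a - x).natAbs + z + 1 ≤ y → c.natAbs ≤ 1 →
        w a z c = w' a z c) →
      trixD w y x = trixD w' y x := by
  intro y
  induction y with
  | zero => intro x _; rfl
  | succ y ih =>
    intro x h
    show med3 _ _ _ = med3 _ _ _
    have hm1 := h x y (-1) (by omega) (by omega) (by simp)
    have hm2 := h x y 0 (by omega) (by omega) (by simp)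
    have hm3 := h x y 1 (by omega) (by omega) (by simp)
    rw [ih (x - 1) (fun a z c hz hb hc => h a z c (by omega) (by omega) hc),
        ih x (fun a z c hz hb hc => h a z c (by omega) (by omega) hc),
        ih (x + 1) (fun a z c hz hb hc => h a z c (by omega) (by omega) hc),
        hm1, hm2, hm3]

lemma measure_ext_singleton' {α : Type*} [MeasurableSpace α] [MeasurableSingletonClass α]
    [Countable α] (μ ν : Measure α) (h : ∀ a, μ {a} = ν {a}) : μ = ν := by
  ext s hs
  have hc : s.Countable := s.to_countable
  have hpd : s.PairwiseDisjoint (fun a => ({a} : Set α)) := fun a _ b _ hab => by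
    simp [Set.disjoint_singleton, hab]
  have hm : ∀ a ∈ s, MeasurableSet ({a} : Set α) := fun a _ => measurableSet_singleton a
  rw [← Set.biUnion_of_singleton s, measure_biUnion hc hpd hm, measure_biUnion hc hpd hm]
  exact tsum_congr fun a => h a

lemma vec_singleton {Ω : Type*} [MeasurableSpace Ω] (μ : Measure Ω)
    (wb : ℤ × ℕ × ℤ → Ω → Bool)
    (hmeas : ∀ p, Measurable (wb p))
    (hindep : iIndepFun wb μ)
    (hdist : ∀ p, μ.map (wb p) = (PMF.uniformOfFintype Bool).toMeasure)
    (S : Finset (ℤ × ℕ × ℤ)) (ι : ℤ × ℕ × ℤ → ℤ × ℕ × ℤ) (hι : Function.Injective ι)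
    (g : S → Bool) :
    μ (⋂ p : S, wb (ι p) ⁻¹' {g p}) = (2 : ENNReal)⁻¹ ^ S.card := by
  have hhalf : ∀ q b, μ (wb q ⁻¹' {b}) = (2 : ENNReal)⁻¹ := by
    intro q b
    have h1 : μ.map (wb q) {b} = μ (wb q ⁻¹' {b}) :=
      Measure.map_apply (hmeas q) (measurableSet_singleton b)
    rw [← h1, hdist q, PMF.toMeasure_apply_singleton _ _ (measurableSet_singleton b),
      PMF.uniformOfFintype_apply]
    simp
  set sets : ℤ × ℕ × ℤ → Set Bool := fun q => {b | ∀ p : S, ι p = q → g p = b} with hsets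
  have key : ∀ p : S, sets (ι p) = {g p} := by
    intro p
    ext b
    simp only [hsets, Set.mem_setOf_eq, Set.mem_singleton_iff]
    constructor
    · intro h; exact (h p rfl).symm
    · intro hb p' hp'
      have : p' = p := Subtype.ext (hι hp')
      rw [this, ← hb]
  have hiter : (⋂ p : S, wb (ι p) ⁻¹' {g p}) = ⋂ q ∈ S.image ι, wb q ⁻¹' sets q := by
    ext ω
    simp only [Set.mem_iInter, Set.mem_preimage, Set.mem_singleton_iff, Finset.mem_image,
      hsets, Set.mem_setOf_eq]
    constructor
    · rintro h q ⟨a, ha, rfl⟩ p' hp'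
      rw [← hp']; exact (h p').symm
    · intro h p
      exact (h (ι p) ⟨p, p.2, rfl⟩ p rfl).symm
  rw [hiter, hindep.measure_inter_preimage_eq_mul (S.image ι) (fun q _ => trivial),
    Finset.prod_image (fun a _ b _ h => hι h)]
  rw [Finset.prod_congr rfl (fun p hp => by
    rw [key ⟨p, hp⟩, hhalf])]
  simp

lemma map_vec_eq {Ω : Type*} [MeasurableSpace Ω] (μ : Measure Ω)
    (wb : ℤ × ℕ × ℤ → Ω → Bool)
    (hmeas : ∀ p, Measurable (wb p))
    (hindep : iIndepFun wb μ)
    (hdist : ∀ p, μ.map (wb p) = (PMF.uniformOfFintype Bool).toMeasure)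
    (S : Finset (ℤ × ℕ × ℤ)) (ι : ℤ × ℕ × ℤ → ℤ × ℕ × ℤ) (hι : Function.Injective ι) :
    μ.map (fun ω (p : S) => wb (ι p) ω) = μ.map (fun ω (p : S) => wb p ω) := by
  have hm1 : Measurable (fun ω (p : S) => wb (ι p) ω) :=
    measurable_pi_lambda _ fun p => hmeas _
  have hm2 : Measurable (fun ω (p : S) => wb p ω) :=
    measurable_pi_lambda _ fun p => hmeas _
  apply measure_ext_singleton'
  intro g
  rw [Measure.map_apply hm1 (measurableSet_singleton g),
    Measure.map_apply hm2 (measurableSet_singleton g)]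
  have h1 : (fun ω (p : S) => wb (ι p) ω) ⁻¹' {g} = ⋂ p : S, wb (ι p) ⁻¹' {g p} := by
    ext ω
    simp [Set.mem_iInter, funext_iff]
  have h2 : (fun ω (p : S) => wb p ω) ⁻¹' {g} = ⋂ p : S, wb (p : ℤ × ℕ × ℤ) ⁻¹' {g p} := by
    ext ω
    simp [Set.mem_iInter, funext_iff]
  rw [h1, h2, vec_singleton μ wb hmeas hindep hdist S ι hι g]
  exact (vec_singleton μ wb hmeas hindep hdist S id Function.injective_id g).symm

/-- The TRIX grid process is mirror symmetric: reflecting the delay assignment about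
column x₀ reflects all pulse times; consequently, with i.i.d. uniform delays the skew
s(H) = d(x+1,H) − d(x,H) is symmetric about 0. -/
theorem trixD_mirror_symmetric {Ω : Type*} [MeasurableSpace Ω] (μ : Measure Ω)
    [IsProbabilityMeasure μ] (wb : ℤ × ℕ × ℤ → Ω → Bool)
    (hmeas : ∀ p, Measurable (wb p))
    (hindep : iIndepFun wb μ)
    (hdist : ∀ p, μ.map (wb p) = (PMF.uniformOfFintype Bool).toMeasure) :
    (∀ (w : ℤ → ℕ → ℤ → ℤ) (x₀ : ℤ) (y : ℕ) (x : ℤ),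
      trixD (fun x y c => w (2 * x₀ - x) y (-c)) y x = trixD w y (2 * x₀ - x)) ∧
    (∀ (H : ℕ) (x : ℤ),
      μ.map (fun ω =>
          trixD (fun x y c => if wb (x, y, c) ω then 1 else 0) H (x + 1) -
            trixD (fun x y c => if wb (x, y, c) ω then 1 else 0) H x) =
        μ.map (fun ω =>
          -(trixD (fun x y c => if wb (x, y, c) ω then 1 else 0) H (x + 1) -
              trixD (fun x y c => if wb (x, y, c) ω then 1 else 0) H x))) := by
  constructor
  · intro w x₀ y x
    exact trixD_reflect w (2 * x₀) y x
  · intro H x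
    -- the reflection p ↦ (2x+1 - p₁, p₂, -p₃)
    set τ : ℤ × ℕ × ℤ → ℤ × ℕ × ℤ := fun p => (2 * x + 1 - p.1, p.2.1, -p.2.2) with hτdef
    have hτ : Function.Injective τ := by
      intro p q h
      simp only [hτdef, Prod.mk.injEq] at h
      obtain ⟨h1, h2, h3⟩ := h
      exact Prod.ext (by omega) (Prod.ext h2 (by omega))
    set S : Finset (ℤ × ℕ × ℤ) :=
      (Finset.Icc (x - (H + 1)) (x + (H + 2))) ×ˢ
        ((Finset.range H) ×ˢ (Finset.Icc (-1 : ℤ) 1)) with hSdef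
    have hSmem : ∀ a (z : ℕ) (c : ℤ), z < H →
        ((a - x).natAbs + z + 1 ≤ H ∨ (a - (x + 1)).natAbs + z + 1 ≤ H) → c.natAbs ≤ 1 →
        (a, z, c) ∈ S := by
      intro a z c hz hb hc
      simp only [hSdef, Finset.mem_product, Finset.mem_Icc, Finset.mem_range]
      refine ⟨⟨by omega, by omega⟩, hz, by omega, by omega⟩
    -- the function computing the skew from finitely many delays
    set F : (S → Bool) → ℤ := fun g =>
      trixD (fun a z c => if h : (a, z, c) ∈ S then (if g ⟨(a, z, c), h⟩ then 1 else 0) else 0)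
          H (x + 1) -
        trixD (fun a z c => if h : (a, z, c) ∈ S then (if g ⟨(a, z, c), h⟩ then 1 else 0) else 0)
          H x with hFdef
    have hcongr : ∀ (f : ℤ × ℕ × ℤ → Bool),
        F (fun p : S => f p) =
          trixD (fun a z c => if f (a, z, c) then 1 else 0) H (x + 1) -
            trixD (fun a z c => if f (a, z, c) then 1 else 0) H x := by
      intro f
      have e1 := trixD_congr
        (fun a z c => if h : (a, z, c) ∈ S then (if f (a, z, c) then 1 else 0) else 0)
        (fun a z c => if f (a, z, c) then 1 else 0) H (x + 1)
        (fun a z c hz hb hc => by rw [dif_pos (hSmem a z c hz (Or.inr hb) hc)])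
      have e2 := trixD_congr
        (fun a z c => if h : (a, z, c) ∈ S then (if f (a, z, c) then 1 else 0) else 0)
        (fun a z c => if f (a, z, c) then 1 else 0) H x
        (fun a z c hz hb hc => by rw [dif_pos (hSmem a z c hz (Or.inl hb) hc)])
      simp only [hFdef]
      rw [e1, e2]
    have hmF : Measurable F := measurable_of_countable F
    have hm1 : Measurable (fun ω (p : S) => wb p ω) :=
      measurable_pi_lambda _ fun p => hmeas _
    have hm2 : Measurable (fun ω (p : S) => wb (τ p) ω) :=
      measurable_pi_lambda _ fun p => hmeas _
    -- LHS: skew = F ∘ (identity vector)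
    have eL : (fun ω =>
        trixD (fun a z c => if wb (a, z, c) ω then 1 else 0) H (x + 1) -
          trixD (fun a z c => if wb (a, z, c) ω then 1 else 0) H x) =
        F ∘ (fun ω (p : S) => wb p ω) := by
      funext ω
      exact (hcongr (fun p => wb p ω)).symm
    -- RHS: −skew = F ∘ (reflected vector)
    have eR : (fun ω =>
        -(trixD (fun a z c => if wb (a, z, c) ω then 1 else 0) H (x + 1) -
            trixD (fun a z c => if wb (a, z, c) ω then 1 else 0) H x)) =
        F ∘ (fun ω (p : S) => wb (τ p) ω) := by
      funext ω
      have h1 := hcongr (fun p => wb (τ p) ω)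
      have hr1 := trixD_reflect (fun a' z' c' => if wb (a', z', c') ω then (1 : ℤ) else 0)
        (2 * x + 1) H (x + 1)
      have hr2 := trixD_reflect (fun a' z' c' => if wb (a', z', c') ω then (1 : ℤ) else 0)
        (2 * x + 1) H x
      have hx1 : 2 * x + 1 - (x + 1) = x := by ring
      have hx2 : 2 * x + 1 - x = x + 1 := by ring
      rw [hx1] at hr1
      rw [hx2] at hr2
      simp only [Function.comp_apply]
      rw [h1]
      have : trixD (fun a z c => if wb (τ (a, z, c)) ω then (1 : ℤ) else 0) H (x + 1) =
          trixD (fun a z c => if wb (a, z, c) ω then (1 : ℤ) else 0) H x := hr1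
      rw [this]
      have : trixD (fun a z c => if wb (τ (a, z, c)) ω then (1 : ℤ) else 0) H x =
          trixD (fun a z c => if wb (a, z, c) ω then (1 : ℤ) else 0) H (x + 1) := hr2
      rw [this]
      ring
    rw [eL, eR, ← Measure.map_map hmF hm1, ← Measure.map_map hmF hm2,
      map_vec_eq μ wb hmeas hindep hdist S τ hτ]
end
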